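/- Let A, B, C, D be a Williamson sequence of order n = dm, and let A′, B′, C′, D′ be the m-compressions of A, B, C, D (sequences of length d). Then PAF_{A′}(s) + PAF_{B′}(s) + PAF_{C′}(s) + PAF_{D′}(s) equals 4n when s ≡ 0 (mod d) and equals 0 for s = 1, …, d−1, and PSD_{A′}(s) + PSD_{B′}(s) + PSD_{C′}(s) + PSD_{D′}(s) = 4n for all s = 0, …, d−1. -/

import Mathlib

/-- The periodic autocorrelation function of the length-`n` sequence `a`. -/
def paf (n : ℕ) (a : ℕ → ℤ) (s : ℕ) : ℤ :=
  ∑ k ∈ Finset.range n, a k * a ((k + s) % n)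

/-- `a` is a symmetric sequence of length `n`: `aᵢ = a_{n-i}` for `1 ≤ i < n`. -/
def SymmSeq (n : ℕ) (a : ℕ → ℤ) : Prop := ∀ i, 1 ≤ i → i < n → a i = a (n - i)

/-- All entries of the length-`n` sequence `a` are `±1`. -/
def PMOne (n : ℕ) (a : ℕ → ℤ) : Prop := ∀ i < n, a i = 1 ∨ a i = -1

/-- `a,b,c,d` are Williamson sequences of order `n`. -/
def IsWilliamson (n : ℕ) (a b c d : ℕ → ℤ) : Prop :=
  SymmSeq n a ∧ SymmSeq n b ∧ SymmSeq n c ∧ SymmSeq n d ∧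
  PMOne n a ∧ PMOne n b ∧ PMOne n c ∧ PMOne n d ∧
  ∀ s, 1 ≤ s → s ≤ n / 2 → paf n a s + paf n b s + paf n c s + paf n d s = 0

/-- The discrete Fourier transform of the length-`n` sequence `a`. -/
noncomputable def dft (n : ℕ) (a : ℕ → ℤ) (s : ℤ) : ℂ :=
  ∑ k ∈ Finset.range n, (a k : ℂ) * Complex.exp (2 * Real.pi * Complex.I * k * s / n)

/-- The power spectral density of the length-`n` sequence `a`. -/
noncomputable def psd (n : ℕ) (a : ℕ → ℤ) (s : ℤ) : ℝ :=
  ‖dft n a s‖ ^ 2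

/-- The `m`-compression of a sequence of length `n = d * m`: a sequence of
length `d` whose `j`-th entry is `a_j + a_{j+d} + ⋯ + a_{j+(m-1)d}`. -/
def compress (d m : ℕ) (a : ℕ → ℤ) (j : ℕ) : ℤ :=
  ∑ i ∈ Finset.range m, a (j + i * d)

/-!
Compression folds the shifts `s, s + d, …, s + (m - 1)d` of a sequence of length `n = dm` into the
single shift `s` of its compression: `PAF_{A'}(s) = ∑ᵢ PAF_A(s + id)`. For Williamson sequences the
summed PAF is `4n` at shift `0` and vanishes at every other shift below `n` (`PAF(n - t) = PAF(t)`
extends the defining condition beyond `n / 2`), so the summed compressed PAF is `4n` at `0` and `0`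
at `1, …, d - 1`. Since the PSD is the discrete Fourier transform of the PAF, the summed PSD is the
transform of `4n` times a delta, the constant `4n`.
-/

open Finset Complex ComplexConjugate Real

theorem Function.Periodic.sum_range_add {M : Type*} [AddCommMonoid M] {f : ℕ → M} {n : ℕ}
    (hf : Function.Periodic f n) (c : ℕ) :
    ∑ k ∈ range n, f (k + c) = ∑ k ∈ range n, f k := by
  induction c with
  | zero => simp
  | succ c ih =>
    rw [← ih]
    cases n with
    | zero => simp
    | succ n =>
      rw [sum_range_succ, sum_range_succ', show n + (c + 1) = c + (n + 1) by omega, hf, zero_add]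
      simp only [add_right_comm _ 1 c, add_assoc]

theorem sum_range_mul_eq_sum_sum {M : Type*} [AddCommMonoid M] (f : ℕ → M) (d m : ℕ) :
    ∑ k ∈ range (d * m), f k = ∑ j ∈ range d, ∑ i ∈ range m, f (j + i * d) := by
  induction m with
  | zero => simp
  | succ m ih =>
    simp only [Nat.mul_succ, sum_range_add, ih, sum_range_succ, sum_add_distrib]
    simp only [add_comm (d * m), mul_comm m]

theorem paf_periodic (n : ℕ) (a : ℕ → ℤ) : Function.Periodic (paf n a) n := by
  intro s
  unfold paf
  refine sum_congr rfl fun k _ => ?_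
  rw [← add_assoc, Nat.add_mod_right]

theorem paf_self_sub (n : ℕ) (a : ℕ → ℤ) {t : ℕ} (ht : t ≤ n) : paf n a (n - t) = paf n a t := by
  have hper : Function.Periodic (fun k => a (k % n) * a ((k + (n - t)) % n)) n := by
    intro k
    simp only [Nat.add_mod_right, add_right_comm k n]
  calc paf n a (n - t) = ∑ k ∈ range n, a (k % n) * a ((k + (n - t)) % n) :=
        sum_congr rfl fun k hk => by rw [Nat.mod_eq_of_lt (mem_range.1 hk)]
    _ = ∑ k ∈ range n, a ((k + t) % n) * a ((k + t + (n - t)) % n) := (hper.sum_range_add t).symm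
    _ = paf n a t := sum_congr rfl fun k hk => by
        rw [add_assoc, Nat.add_sub_cancel' ht, Nat.add_mod_right, Nat.mod_eq_of_lt (mem_range.1 hk),
          mul_comm]

theorem paf_zero_of_pmOne {n : ℕ} {a : ℕ → ℤ} (ha : PMOne n a) : paf n a 0 = n := by
  calc paf n a 0 = ∑ _k ∈ range n, (1 : ℤ) := sum_congr rfl fun k hk => by
        rw [add_zero, Nat.mod_eq_of_lt (mem_range.1 hk)]
        rcases ha k (mem_range.1 hk) with h | h <;> simp [h]
    _ = n := by simp

theorem IsWilliamson.paf_add_eq {n : ℕ} {a b c d : ℕ → ℤ} (hW : IsWilliamson n a b c d)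
    {t : ℕ} (ht : t < n) :
    paf n a t + paf n b t + paf n c t + paf n d t = if t = 0 then 4 * n else 0 := by
  obtain ⟨-, -, -, -, ha, hb, hc, hd, hpaf⟩ := hW
  split_ifs with h0
  · subst h0
    rw [paf_zero_of_pmOne ha, paf_zero_of_pmOne hb, paf_zero_of_pmOne hc, paf_zero_of_pmOne hd]
    push_cast
    ring
  rcases le_or_gt t (n / 2) with hle | hgt
  · exact hpaf t (by omega) hle
  · rw [← paf_self_sub n a ht.le, ← paf_self_sub n b ht.le, ← paf_self_sub n c ht.le,
      ← paf_self_sub n d ht.le]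
    exact hpaf (n - t) (by omega) (by omega)

theorem add_mul_lt_mul {r d i m : ℕ} (hr : r < d) (hi : i < m) : r + i * d < d * m :=
  calc r + i * d < d + i * d := Nat.add_lt_add_right hr _
    _ = (i + 1) * d := by ring
    _ ≤ d * m := by rw [mul_comm]; exact Nat.mul_le_mul_left d hi

theorem sum_mod_eq_compress {d : ℕ} (hd : 0 < d) (m : ℕ) (a : ℕ → ℤ) (x : ℕ) :
    ∑ i ∈ range m, a ((x + i * d) % (d * m)) = compress d m a (x % d) := by
  have hper : Function.Periodic (fun i => a ((x % d + i * d) % (d * m))) m := by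
    intro i
    simp only [add_mul, ← add_assoc, mul_comm m d, Nat.add_mod_right]
  calc ∑ i ∈ range m, a ((x + i * d) % (d * m))
      = ∑ i ∈ range m, a ((x % d + (i + x / d) * d) % (d * m)) :=
        sum_congr rfl fun i _ => by
          rw [add_mul, add_left_comm, mul_comm (x / d), Nat.mod_add_div, add_comm x]
    _ = ∑ i ∈ range m, a ((x % d + i * d) % (d * m)) := hper.sum_range_add _
    _ = compress d m a (x % d) := sum_congr rfl fun i hi => by
        rw [Nat.mod_eq_of_lt (add_mul_lt_mul (Nat.mod_lt x hd) (mem_range.1 hi))]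

theorem paf_compress {d : ℕ} (hd : 0 < d) (m : ℕ) (a : ℕ → ℤ) (s : ℕ) :
    paf d (compress d m a) s = ∑ i ∈ range m, paf (d * m) a (s + i * d) := by
  calc paf d (compress d m a) s
      = ∑ j ∈ range d, ∑ i ∈ range m, a (j + i * d) * compress d m a ((j + i * d + s) % d) := by
        refine sum_congr rfl fun j _ => ?_
        rw [compress, sum_mul]
        refine sum_congr rfl fun i _ => ?_
        rw [add_right_comm, Nat.add_mul_mod_self_right]
    _ = ∑ k ∈ range (d * m), a k * compress d m a ((k + s) % d) :=
        (sum_range_mul_eq_sum_sum (fun k => a k * compress d m a ((k + s) % d)) d m).symm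
    _ = ∑ k ∈ range (d * m), ∑ i ∈ range m, a k * a ((k + (s + i * d)) % (d * m)) := by
        refine sum_congr rfl fun k _ => ?_
        rw [← mul_sum, ← sum_mod_eq_compress hd]
        simp only [add_assoc]
    _ = ∑ i ∈ range m, paf (d * m) a (s + i * d) := sum_comm

theorem IsWilliamson.paf_compress_add_eq {d m : ℕ} (hd : 0 < d) {a b c d' : ℕ → ℤ}
    (hW : IsWilliamson (d * m) a b c d') {s : ℕ} (hs : s < d) :
    paf d (compress d m a) s + paf d (compress d m b) s + paf d (compress d m c) s +
      paf d (compress d m d') s = if s = 0 then 4 * ((d * m : ℕ) : ℤ) else 0 := by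
  simp only [paf_compress hd, ← sum_add_distrib]
  rw [sum_congr rfl fun i hi => hW.paf_add_eq (add_mul_lt_mul hs (mem_range.1 hi))]
  rcases Nat.eq_zero_or_pos m with rfl | hm
  · simp
  by_cases hs0 : s = 0 <;> simp [hs0, hd.ne', hm]

theorem sum_mul_sum_eq_sum_paf_mul_pow {R : Type*} [CommRing R] (n : ℕ) (a : ℕ → ℤ) {ω ω' : R}
    (h : ω * ω' = 1) (h' : ω' ^ n = 1) :
    (∑ k ∈ range n, (a k : R) * ω ^ k) * ∑ l ∈ range n, (a l : R) * ω' ^ l =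
      ∑ t ∈ range n, (paf n a t : R) * ω' ^ t := by
  have hshift (k : ℕ) : ∑ l ∈ range n, (a k : R) * ω ^ k * ((a l : R) * ω' ^ l) =
      ∑ t ∈ range n, (a k : R) * (a ((k + t) % n) : R) * ω' ^ t := by
    have hper : Function.Periodic (fun l => (a k : R) * ω ^ k * ((a (l % n) : R) * ω' ^ l)) n := by
      intro l
      simp only [Nat.add_mod_right, pow_add, h', mul_one]
    have hk : ω ^ k * ω' ^ k = 1 := by rw [← mul_pow, h, one_pow]
    calc ∑ l ∈ range n, (a k : R) * ω ^ k * ((a l : R) * ω' ^ l)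
        = ∑ l ∈ range n, (a k : R) * ω ^ k * ((a (l % n) : R) * ω' ^ l) :=
          sum_congr rfl fun l hl => by rw [Nat.mod_eq_of_lt (mem_range.1 hl)]
      _ = ∑ t ∈ range n, (a k : R) * ω ^ k * ((a ((t + k) % n) : R) * ω' ^ (t + k)) :=
          (hper.sum_range_add k).symm
      _ = ∑ t ∈ range n, (a k : R) * (a ((k + t) % n) : R) * ω' ^ t :=
          sum_congr rfl fun t _ => by
            rw [add_comm t k, pow_add]
            linear_combination (a k : R) * (a ((k + t) % n) : R) * ω' ^ t * hk
  rw [sum_mul_sum, sum_congr rfl fun k _ => hshift k, sum_comm]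
  simp only [paf, Int.cast_sum, Int.cast_mul, sum_mul]

theorem dft_eq_sum_mul_pow (n : ℕ) (a : ℕ → ℤ) (s : ℤ) :
    dft n a s = ∑ k ∈ range n, (a k : ℂ) * exp (2 * π * I * s / n) ^ k :=
  sum_congr rfl fun k _ => by rw [← Complex.exp_nat_mul]; ring_nf

theorem conj_dft (n : ℕ) (a : ℕ → ℤ) (s : ℤ) :
    conj (dft n a s) = ∑ k ∈ range n, (a k : ℂ) * (exp (2 * π * I * s / n))⁻¹ ^ k := by
  have hconj : conj (exp (2 * π * I * s / n)) = (exp (2 * π * I * s / n))⁻¹ := by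
    rw [← Complex.exp_conj, ← Complex.exp_neg]
    simp only [map_div₀, map_mul, map_ofNat, conj_ofReal, conj_I, map_intCast, map_natCast]
    ring_nf
  simp only [dft_eq_sum_mul_pow, map_sum, map_mul, map_pow, map_intCast, hconj]

theorem exp_two_pi_I_div_pow_self {n : ℕ} (hn : n ≠ 0) (s : ℤ) :
    exp (2 * π * I * s / n) ^ n = 1 := by
  rw [← Complex.exp_nat_mul, ← exp_int_mul_two_pi_mul_I s]
  congr 1
  field_simp

theorem psd_eq_sum_paf_mul_pow {n : ℕ} (hn : n ≠ 0) (a : ℕ → ℤ) (s : ℤ) :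
    (psd n a s : ℂ) = ∑ t ∈ range n, (paf n a t : ℂ) * (exp (2 * π * I * s / n))⁻¹ ^ t := by
  rw [psd, ofReal_pow, ← mul_conj', conj_dft, dft_eq_sum_mul_pow]
  exact sum_mul_sum_eq_sum_paf_mul_pow n a (mul_inv_cancel₀ (exp_ne_zero _))
    (by rw [inv_pow, exp_two_pi_I_div_pow_self hn, inv_one])

theorem compression_paf_psd (n d m : ℕ) (hn : n = d * m) (a b c d' : ℕ → ℤ)
    (hW : IsWilliamson n a b c d') :
    (∀ s : ℕ, d ∣ s →
      paf d (compress d m a) s + paf d (compress d m b) s +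
        paf d (compress d m c) s + paf d (compress d m d') s = 4 * n) ∧
    (∀ s : ℕ, 1 ≤ s → s ≤ d - 1 →
      paf d (compress d m a) s + paf d (compress d m b) s +
        paf d (compress d m c) s + paf d (compress d m d') s = 0) ∧
    (∀ s : ℕ, s ≤ d - 1 →
      psd d (compress d m a) s + psd d (compress d m b) s +
        psd d (compress d m c) s + psd d (compress d m d') s = 4 * n) := by
  subst hn
  rcases Nat.eq_zero_or_pos d with rfl | hd
  · refine ⟨fun s _ => ?_, fun s _ _ => ?_, fun s _ => ?_⟩ <;> simp_all [paf, psd, dft]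
  have hpaf := fun s (hs : s < d) => hW.paf_compress_add_eq hd hs
  refine ⟨fun s hs => ?_, fun s hs₁ hs₂ => ?_, fun s _ => ?_⟩
  · obtain ⟨k, rfl⟩ := hs
    have hperiod := fun A => (paf_periodic d A).nsmul_eq k
    simp only [mul_comm d k, ← smul_eq_mul, hperiod]
    simpa using hpaf 0 hd
  · simpa [Nat.one_le_iff_ne_zero.1 hs₁] using hpaf s (by omega)
  · apply ofReal_injective
    push_cast [psd_eq_sum_paf_mul_pow hd.ne']
    simp only [← sum_add_distrib, ← add_mul]
    norm_cast
    rw [sum_congr rfl fun t ht => by rw [hpaf t (mem_range.1 ht)]]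
    simp [hd]
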